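/- Let C : ℝ^n → ℝ be strictly convex differentiable and U : ℝ^n → ℝ strictly concave differentiable, and let (P̄_g, P̄_d, v̄, λ̄) be an equilibrium of the primal-dual gradient dynamics for the problem min C(P_g) - U(P_d) subject to D_c v - P_g + P_d = 0. Define V(x) = ½(x - x̄)ᵀ τ⁻¹ (x - x̄) with x = (τ_g P_g, τ_d P_d, τ_v v, τ_λ λ). Then along solutions, V̇ ≤ 0, with equality only if P_g = P̄_g and P_d = P̄_d. -/

import Mathlib

open Set

lemma grad_strict_mono {n : ℕ} (f : EuclideanSpace ℝ (Fin n) → ℝ)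
    (g : EuclideanSpace ℝ (Fin n) → EuclideanSpace ℝ (Fin n))
    (hf : StrictConvexOn ℝ Set.univ f)
    (hg : ∀ z, HasGradientAt f (g z) z)
    {x y : EuclideanSpace ℝ (Fin n)} (hne : x ≠ y) :
    0 < ∑ i, (g x i - g y i) * (x i - y i) := by
  set c : ℝ → EuclideanSpace ℝ (Fin n) := fun t => y + t • (x - y) with hc
  have hcd : ∀ t : ℝ, HasDerivAt c (x - y) t := by
    intro t
    simpa [hc] using ((hasDerivAt_id t).smul_const (x - y)).const_add y
  have hφd : ∀ t : ℝ, HasDerivAt (fun s => f (c s)) ((inner ℝ (g (c t)) (x - y) : ℝ)) t := by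
    intro t
    have h1 := ((hasGradientAt_iff_hasFDerivAt).mp (hg (c t))).comp_hasDerivAt t (hcd t)
    rw [← InnerProductSpace.toDual_apply_apply]; exact h1
  have hφconv : StrictConvexOn ℝ Set.univ (fun s => f (c s)) := by
    refine ⟨convex_univ, ?_⟩
    intro a _ b _ hab s t hs ht hst
    have hpts : c (s * a + t * b) = s • c a + t • c b := by
      have h2 : s • c a + t • c b = (s + t) • y + (s * a + t * b) • (x - y) := by
        simp only [hc]; module
      rw [h2, hst, one_smul]
    have hcinj : c a ≠ c b := by
      intro h
      apply hab
      have : (a - b) • (x - y) = 0 := by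
        have := sub_eq_zero.mpr h
        simp only [hc] at this
        rw [show y + a • (x - y) - (y + b • (x - y)) = (a - b) • (x - y) by module] at this
        exact this
      rcases smul_eq_zero.mp this with h' | h'
      · exact sub_eq_zero.mp h'
      · exact absurd (sub_eq_zero.mp h') hne
    calc f (c (s • a + t • b)) = f (s • c a + t • c b) := by rw [← hpts]; norm_num
      _ < s • f (c a) + t • f (c b) := hf.2 (mem_univ _) (mem_univ _) hcinj hs ht hst
  have h0 : c 0 = y := by simp [hc]
  have h1 : c 1 = x := by simp [hc]
  have hlt1 : (inner ℝ (g (c 0)) (x - y) : ℝ) < slope (fun s => f (c s)) 0 1 :=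
    hφconv.lt_slope_of_hasDerivAt (mem_univ _) (mem_univ _) one_pos (hφd 0)
  have hlt2 : slope (fun s => f (c s)) 0 1 < (inner ℝ (g (c 1)) (x - y) : ℝ) :=
    hφconv.slope_lt_of_hasDerivAt (mem_univ _) (mem_univ _) one_pos (hφd 1)
  have hxy : (inner ℝ (g y) (x - y) : ℝ) < (inner ℝ (g x) (x - y) : ℝ) := by
    rw [← h0, ← h1] at *
    exact hlt1.trans hlt2
  have h2 : 0 < (inner ℝ (g x - g y) (x - y) : ℝ) := by
    rw [inner_sub_left]; linarith
  simpa [PiLp.inner_apply, RCLike.inner_apply, PiLp.sub_apply, mul_comm] using h2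


/-- Lyapunov decrease for the primal-dual gradient dynamics around an equilibrium
`(P̄_g, P̄_d, v̄, λ̄)` (with `C` strictly convex, `U` strictly concave):
along solutions, `V̇ ≤ 0` with equality only if `P_g = P̄_g` and `P_d = P̄_d`, where
`V = ½(x - x̄)ᵀ τ⁻¹ (x - x̄)` with `x = (τ_g P_g, τ_d P_d, τ_v v, τ_λ λ)`. -/
theorem primal_dual_lyapunov_decrease (n m : ℕ)
    (C U : EuclideanSpace ℝ (Fin n) → ℝ)
    (gradC gradU : EuclideanSpace ℝ (Fin n) → EuclideanSpace ℝ (Fin n))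
    (Dc : Matrix (Fin n) (Fin m) ℝ)
    (hC : StrictConvexOn ℝ Set.univ C) (hU : StrictConcaveOn ℝ Set.univ U)
    (hgC : ∀ x, HasGradientAt C (gradC x) x)
    (hgU : ∀ x, HasGradientAt U (gradU x) x)
    (τg τd τlam : Fin n → ℝ) (τv : Fin m → ℝ)
    (hτg : ∀ i, 0 < τg i) (hτd : ∀ i, 0 < τd i)
    (hτv : ∀ k, 0 < τv k) (hτlam : ∀ i, 0 < τlam i)
    -- the equilibrium (KKT point)
    (Pgb Pdb lamb : EuclideanSpace ℝ (Fin n)) (vb : EuclideanSpace ℝ (Fin m))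
    (heq1 : gradC Pgb = lamb) (heq2 : gradU Pdb = lamb)
    (heq3 : Dc.transpose.mulVec (fun i => lamb i) = 0)
    (heq4 : ∀ i, Dc.mulVec (fun k => vb k) i - Pgb i + Pdb i = 0)
    -- a solution of the dynamics
    (Pg Pd lam : ℝ → EuclideanSpace ℝ (Fin n)) (v : ℝ → EuclideanSpace ℝ (Fin m))
    (Pg' Pd' lam' : ℝ → Fin n → ℝ) (v' : ℝ → Fin m → ℝ)
    (hPg : ∀ t i, HasDerivAt (fun s => Pg s i) (Pg' t i) t)
    (hPd : ∀ t i, HasDerivAt (fun s => Pd s i) (Pd' t i) t)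
    (hv : ∀ t k, HasDerivAt (fun s => v s k) (v' t k) t)
    (hlam : ∀ t i, HasDerivAt (fun s => lam s i) (lam' t i) t)
    (hPgdyn : ∀ t i, τg i * Pg' t i = -(gradC (Pg t) i) + lam t i)
    (hPddyn : ∀ t i, τd i * Pd' t i = gradU (Pd t) i - lam t i)
    (hvdyn : ∀ t k, τv k * v' t k = -(Dc.transpose.mulVec (fun i => lam t i) k))
    (hlamdyn : ∀ t i, τlam i * lam' t i =
      Dc.mulVec (fun k => v t k) i - Pg t i + Pd t i) :
    ∀ V : ℝ → ℝ,
      (V = fun t => (1 / 2) *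
        (∑ i, τg i * (Pg t i - Pgb i) ^ 2 + ∑ i, τd i * (Pd t i - Pdb i) ^ 2 +
         ∑ k, τv k * (v t k - vb k) ^ 2 + ∑ i, τlam i * (lam t i - lamb i) ^ 2)) →
      ∀ t, ∃ d : ℝ, HasDerivAt V d t ∧ d ≤ 0 ∧ (d = 0 → Pg t = Pgb ∧ Pd t = Pdb) := by
  intro V hV t
  subst hV
  -- negated gradient of U
  have hgU' : ∀ z, HasGradientAt (fun x => -U x) (-gradU z) z := by
    intro z
    rw [hasGradientAt_iff_hasFDerivAt]
    have := ((hasGradientAt_iff_hasFDerivAt).mp (hgU z)).neg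
    rw [map_neg]; exact this
  set A : ℝ := ∑ i, (gradC (Pg t) i - gradC Pgb i) * (Pg t i - Pgb i) with hA
  set B : ℝ := ∑ i, (gradU (Pd t) i - gradU Pdb i) * (Pd t i - Pdb i) with hB
  -- sign facts
  have hApos : Pg t ≠ Pgb → 0 < A := fun h => grad_strict_mono C gradC hC hgC h
  have hBneg : Pd t ≠ Pdb → B < 0 := by
    intro h
    have := grad_strict_mono (fun x => -U x) (fun z => -gradU z) hU.neg hgU' h
    have hrw : ∑ i, ((-gradU (Pd t)) i - (-gradU Pdb) i) * (Pd t i - Pdb i) = -B := by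
      rw [hB, ← Finset.sum_neg_distrib]
      refine Finset.sum_congr rfl fun i _ => ?_
      simp only [PiLp.neg_apply]
      ring
    rw [hrw] at this
    linarith
  have hAnn : 0 ≤ A := by
    by_cases h : Pg t = Pgb
    · simp [hA, h]
    · exact (hApos h).le
  have hBnp : B ≤ 0 := by
    by_cases h : Pd t = Pdb
    · simp [hB, h]
    · exact (hBneg h).le
  -- derivative of V
  have h1 : HasDerivAt (fun s => ∑ i, τg i * (Pg s i - Pgb i) ^ 2)
      (∑ i, τg i * (2 * (Pg t i - Pgb i) * Pg' t i)) t := by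
    refine HasDerivAt.fun_sum fun i _ => ?_
    have := (((hPg t i).sub_const (Pgb i)).pow 2).const_mul (τg i)
    simpa [mul_comm, mul_assoc, mul_left_comm] using this
  have h2 : HasDerivAt (fun s => ∑ i, τd i * (Pd s i - Pdb i) ^ 2)
      (∑ i, τd i * (2 * (Pd t i - Pdb i) * Pd' t i)) t := by
    refine HasDerivAt.fun_sum fun i _ => ?_
    have := (((hPd t i).sub_const (Pdb i)).pow 2).const_mul (τd i)
    simpa [mul_comm, mul_assoc, mul_left_comm] using this
  have h3 : HasDerivAt (fun s => ∑ k, τv k * (v s k - vb k) ^ 2)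
      (∑ k, τv k * (2 * (v t k - vb k) * v' t k)) t := by
    refine HasDerivAt.fun_sum fun k _ => ?_
    have := (((hv t k).sub_const (vb k)).pow 2).const_mul (τv k)
    simpa [mul_comm, mul_assoc, mul_left_comm] using this
  have h4 : HasDerivAt (fun s => ∑ i, τlam i * (lam s i - lamb i) ^ 2)
      (∑ i, τlam i * (2 * (lam t i - lamb i) * lam' t i)) t := by
    refine HasDerivAt.fun_sum fun i _ => ?_
    have := (((hlam t i).sub_const (lamb i)).pow 2).const_mul (τlam i)
    simpa [mul_comm, mul_assoc, mul_left_comm] using this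
  have hD := (((h1.add h2).add h3).add h4).const_mul (1 / 2 : ℝ)
  -- simplify the derivative value using the dynamics
  have e1 : ∑ i, τg i * (2 * (Pg t i - Pgb i) * Pg' t i)
      = 2 * ∑ i, (Pg t i - Pgb i) * (-(gradC (Pg t) i) + lam t i) := by
    rw [Finset.mul_sum]
    refine Finset.sum_congr rfl fun i _ => ?_
    rw [← hPgdyn t i]; ring
  have e2 : ∑ i, τd i * (2 * (Pd t i - Pdb i) * Pd' t i)
      = 2 * ∑ i, (Pd t i - Pdb i) * (gradU (Pd t) i - lam t i) := by
    rw [Finset.mul_sum]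
    refine Finset.sum_congr rfl fun i _ => ?_
    rw [← hPddyn t i]; ring
  have e3 : ∑ k, τv k * (2 * (v t k - vb k) * v' t k)
      = 2 * ∑ k, (v t k - vb k) * (-(Dc.transpose.mulVec (fun i => lam t i) k)) := by
    rw [Finset.mul_sum]
    refine Finset.sum_congr rfl fun k _ => ?_
    rw [show τv k * (2 * (v t k - vb k) * v' t k)
        = 2 * ((v t k - vb k) * (τv k * v' t k)) by ring, hvdyn t k]
  have e4 : ∑ i, τlam i * (2 * (lam t i - lamb i) * lam' t i)
      = 2 * ∑ i, (lam t i - lamb i) * (Dc.mulVec (fun k => v t k) i - Pg t i + Pd t i) := by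
    rw [Finset.mul_sum]
    refine Finset.sum_congr rfl fun i _ => ?_
    rw [show τlam i * (2 * (lam t i - lamb i) * lam' t i)
        = 2 * ((lam t i - lamb i) * (τlam i * lam' t i)) by ring, hlamdyn t i]
  -- abbreviations for deviations
  set w : Fin n → ℝ := fun i => lam t i - lamb i with hw
  set cc : Fin m → ℝ := fun k => v t k - vb k with hcc
  -- rewrite the matrix terms around the equilibrium
  have hT3 : ∀ k, Dc.transpose.mulVec (fun i => lam t i) k = Dc.transpose.mulVec w k := by
    intro k
    have hsplit : (fun i => lam t i) = (fun i => w i) + (fun i => lamb i) := by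
      funext i; simp [hw]
    rw [hsplit, Matrix.mulVec_add, Pi.add_apply, heq3]
    simp
  have hT4 : ∀ i, Dc.mulVec (fun k => v t k) i - Pg t i + Pd t i
      = Dc.mulVec cc i - (Pg t i - Pgb i) + (Pd t i - Pdb i) := by
    intro i
    have hsplit : (fun k => v t k) = (fun k => cc k) + (fun k => vb k) := by
      funext k; simp [hcc]
    have h4' := heq4 i
    rw [hsplit, Matrix.mulVec_add, Pi.add_apply]
    linarith
  -- cross-term cancellation
  have key : ∑ k, cc k * Dc.transpose.mulVec w k = ∑ i, w i * Dc.mulVec cc i := by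
    simp only [Matrix.mulVec, dotProduct, Matrix.transpose_apply,
      Finset.mul_sum, Finset.sum_mul]
    rw [Finset.sum_comm]
    refine Finset.sum_congr rfl fun i _ => Finset.sum_congr rfl fun k _ => by ring
  -- the value of the derivative
  have s1 : ∑ i, (Pg t i - Pgb i) * (-(gradC (Pg t) i) + lam t i)
      = (∑ i, w i * (Pg t i - Pgb i)) - A := by
    rw [hA, ← Finset.sum_sub_distrib]
    refine Finset.sum_congr rfl fun i _ => ?_
    have hb : gradC Pgb i = lamb i := by rw [heq1]
    simp only [hw]
    rw [hb]  -- might fail orientation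
    ring
  have s2 : ∑ i, (Pd t i - Pdb i) * (gradU (Pd t) i - lam t i)
      = B - ∑ i, w i * (Pd t i - Pdb i) := by
    rw [hB, ← Finset.sum_sub_distrib]
    refine Finset.sum_congr rfl fun i _ => ?_
    have hb : gradU Pdb i = lamb i := by rw [heq2]
    simp only [hw]
    rw [hb]
    ring
  have s3 : ∑ k, (v t k - vb k) * (-(Dc.transpose.mulVec (fun i => lam t i) k))
      = -∑ k, cc k * Dc.transpose.mulVec w k := by
    rw [← Finset.sum_neg_distrib]
    refine Finset.sum_congr rfl fun k _ => ?_
    rw [hT3 k]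
    simp only [hcc]
    ring
  have s4 : ∑ i, (lam t i - lamb i) * (Dc.mulVec (fun k => v t k) i - Pg t i + Pd t i)
      = (∑ i, w i * Dc.mulVec cc i) - (∑ i, w i * (Pg t i - Pgb i))
        + (∑ i, w i * (Pd t i - Pdb i)) := by
    rw [← Finset.sum_sub_distrib, ← Finset.sum_add_distrib]
    refine Finset.sum_congr rfl fun i _ => ?_
    rw [hT4 i]
    simp only [hw]
    ring
  refine ⟨-A + B, ?_, by linarith, ?_⟩
  · have hval : (1 / 2 : ℝ) *
        (∑ i, τg i * (2 * (Pg t i - Pgb i) * Pg' t i)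
          + ∑ i, τd i * (2 * (Pd t i - Pdb i) * Pd' t i)
          + ∑ k, τv k * (2 * (v t k - vb k) * v' t k)
          + ∑ i, τlam i * (2 * (lam t i - lamb i) * lam' t i)) = -A + B := by
      rw [e1, e2, e3, e4, s1, s2, s3, s4]
      linarith [key]
    exact hval ▸ hD
  · intro hd0
    constructor
    · by_contra h
      have := hApos h
      linarith
    · by_contra h
      have := hBneg h
      linarith
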